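/- Let (R,m) be a one-dimensional Cohen–Macaulay local ring and I a regular stable ideal with principal reduction (x). Then tr(I) ≅ I* as R-modules and tr(I) = (x):I. -/
import Mathlib


open nonZeroDivisors IsLocalRing

/-- The trace ideal of an `R`-module `M`. -/
noncomputable def traceIdeal (R : Type*) [CommRing R] (M : Type*) [AddCommGroup M]
    [Module R M] : Ideal R :=
  ⨆ f : M →ₗ[R] R, LinearMap.range f

section Aux

variable {R : Type*} [CommRing R] {I : Ideal R} {x : R}

/-- Division by the nonzerodivisor `x`: given `c` with `c·I ⊆ (x)`, the map
`a ↦ c·a/x` is a well-defined linear map `I → R`. -/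
noncomputable def divLin (hx : x ∈ R⁰) (c : R) (hc : ∀ a ∈ I, ∃ b, c * a = x * b) :
    I →ₗ[R] R where
  toFun a := (hc a a.2).choose
  map_add' a b := by
    have ha := (hc a a.2).choose_spec
    have hb := (hc b b.2).choose_spec
    have hab := (hc (a + b) (a + b).2).choose_spec
    rw [← mul_cancel_left_mem_nonZeroDivisors hx]
    rw [← hab]
    push_cast
    rw [mul_add, mul_add, ← ha, ← hb]
  map_smul' r a := by
    have ha := (hc a a.2).choose_spec
    have hra := (hc (r • a) (r • a).2).choose_spec
    rw [RingHom.id_apply, ← mul_cancel_left_mem_nonZeroDivisors hx, ← hra,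
      smul_eq_mul, smul_eq_mul]
    calc c * (r * (a : R)) = r * (c * (a : R)) := by ring
      _ = r * (x * (hc a a.2).choose) := congrArg (fun t => r * t) ha
      _ = x * (r * (hc a a.2).choose) := by ring

theorem divLin_spec (hx : x ∈ R⁰) (c : R) (hc : ∀ a ∈ I, ∃ b, c * a = x * b) (a : I) :
    x * divLin hx c hc a = c * a :=
  ((hc a a.2).choose_spec).symm

end Aux

/-- Let `(R,m)` be a one-dimensional Cohen–Macaulay local ring and `I` a
regular stable ideal with principal reduction `(x)` (so `I² = xI` with `x ∈ I`
a nonzerodivisor).  Then `tr(I) ≅ I*` as `R`-modules, and `tr(I) = (x):I`. -/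
theorem trace_of_stable (R : Type*) [CommRing R] [IsLocalRing R] [IsNoetherianRing R]
    (hdim : ringKrullDim R = 1)
    (hCM : ∃ r ∈ maximalIdeal R, r ∈ R⁰)
    (I : Ideal R) (hreg : ∃ y ∈ I, y ∈ R⁰)
    (x : R) (hxI : x ∈ I) (hx : x ∈ R⁰)
    (hstab : I ^ 2 = Ideal.span {x} * I) :
    Nonempty ((traceIdeal R I) ≃ₗ[R] (I →ₗ[R] R)) ∧
      traceIdeal R I = (Ideal.span {x}).colon I := by
  -- any value of any linear functional lies in the colon ideal
  have hval : ∀ (f : I →ₗ[R] R) (a : I), f a ∈ (Ideal.span {x}).colon I := by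
    intro f a
    rw [Submodule.mem_colon]
    intro i hi
    have hmem : (i : R) * (a : R) ∈ I ^ 2 := by
      rw [sq]; exact Ideal.mul_mem_mul hi a.2
    rw [hstab, Ideal.mem_span_singleton_mul] at hmem
    obtain ⟨u, hu, hxu⟩ := hmem
    have h1 : f a * i = x * f ⟨u, hu⟩ := by
      have e1 : i • a = (x • (⟨u, hu⟩ : I) : I) := by
        apply Subtype.ext
        push_cast
        rw [smul_eq_mul, smul_eq_mul, ← hxu, mul_comm]
      calc f a * i = i • f a := by rw [smul_eq_mul, mul_comm]
        _ = f (i • a) := (f.map_smul i a).symm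
        _ = f (x • (⟨u, hu⟩ : I)) := by rw [e1]
        _ = x * f ⟨u, hu⟩ := by rw [f.map_smul, smul_eq_mul]
    rw [smul_eq_mul, h1]
    exact Ideal.mem_span_singleton.mpr ⟨f ⟨u, hu⟩, rfl⟩
  -- elements of the colon ideal satisfy the divisibility hypothesis
  have hdvd : ∀ c ∈ (Ideal.span {x}).colon I, ∀ a ∈ I, ∃ b, c * a = x * b := by
    intro c hc a ha
    have := Submodule.mem_colon.mp hc a ha
    rw [smul_eq_mul, Ideal.mem_span_singleton] at this
    obtain ⟨b, hb⟩ := this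
    exact ⟨b, hb⟩
  -- the equality of ideals
  have heq : traceIdeal R I = (Ideal.span {x}).colon I := by
    apply le_antisymm
    · apply iSup_le
      intro f
      rintro _ ⟨a, rfl⟩
      exact hval f a
    · intro c hc
      have hfx : divLin hx c (hdvd c hc) ⟨x, hxI⟩ = c := by
        rw [← mul_cancel_left_mem_nonZeroDivisors hx, divLin_spec, mul_comm]
      have : c ∈ LinearMap.range (divLin hx c (hdvd c hc)) := ⟨⟨x, hxI⟩, hfx⟩
      exact le_iSup (fun f : I →ₗ[R] R => LinearMap.range f) _ this
  refine ⟨?_, heq⟩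
  -- construct the linear map Φ : colon → (I →ₗ[R] R)
  let Φ : ((Ideal.span {x}).colon I) →ₗ[R] (I →ₗ[R] R) :=
    { toFun := fun c => divLin hx c.1 (hdvd c.1 c.2)
      map_add' := by
        intro c c'
        ext a
        rw [← mul_cancel_left_mem_nonZeroDivisors hx]
        simp only [LinearMap.add_apply]
        rw [divLin_spec, mul_add, divLin_spec, divLin_spec, Submodule.coe_add, add_mul]
      map_smul' := by
        intro r c
        ext a
        rw [← mul_cancel_left_mem_nonZeroDivisors hx]
        simp only [LinearMap.smul_apply, RingHom.id_apply, smul_eq_mul]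
        rw [mul_left_comm, divLin_spec, divLin_spec, Submodule.coe_smul, smul_eq_mul, mul_assoc] }
  have hΦx : ∀ c : (Ideal.span {x}).colon I, Φ c ⟨x, hxI⟩ = (c : R) := by
    intro c
    rw [← mul_cancel_left_mem_nonZeroDivisors hx]
    show x * divLin hx c.1 (hdvd c.1 c.2) ⟨x, hxI⟩ = _
    rw [divLin_spec, mul_comm]
  have hbij : Function.Bijective Φ := by
    constructor
    · intro c c' h
      apply Subtype.ext
      rw [← hΦx c, ← hΦx c', h]
    · intro f
      have hfx : f ⟨x, hxI⟩ ∈ (Ideal.span {x}).colon I := hval f ⟨x, hxI⟩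
      refine ⟨⟨f ⟨x, hxI⟩, hfx⟩, ?_⟩
      ext a
      rw [← mul_cancel_left_mem_nonZeroDivisors hx]
      show x * divLin hx (f ⟨x, hxI⟩) (hdvd _ hfx) a = x * f a
      rw [divLin_spec]
      calc f ⟨x, hxI⟩ * a = (a : R) • f ⟨x, hxI⟩ := by rw [smul_eq_mul, mul_comm]
        _ = f ((a : R) • ⟨x, hxI⟩) := (f.map_smul _ _).symm
        _ = f (x • a) := by
            congr 1
            apply Subtype.ext
            push_cast
            rw [smul_eq_mul, smul_eq_mul, mul_comm]
        _ = x * f a := by rw [f.map_smul, smul_eq_mul]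
  exact ⟨(LinearEquiv.ofEq _ _ heq).trans (LinearEquiv.ofBijective Φ hbij)⟩
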